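/- The Ricci tensor of the deformed Riemannian extension g_{D,Φ}, with components ρ_{ab} = Σ_c ∂_c 𝚪^c_{ab} − ∂_a (Σ_c 𝚪^c_{cb}) + Σ_{c,d} (𝚪^c_{cd} 𝚪^d_{ab} − 𝚪^c_{ad} 𝚪^d_{cb}) computed from its Levi-Civita Christoffel symbols 𝚪, satisfies: ρ_{ab} = 0 whenever a or b is a primed index, and ρ_{ij}(x¹, x², x₁', x₂') = 2 ρ^{D,sym}_{ij}(x¹, x²) for i,j ∈ {1,2}. In particular the Ricci tensor of g_{D,Φ} is independent of Φ and of the fiber coordinates (x₁', x₂'). -/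

import Mathlib

noncomputable section

/-- Points of the affine surface `Σ` (local coordinates `(x¹,x²)`). -/
abbrev Pt2 := Fin 2 → ℝ
/-- Points of the cotangent bundle `T*Σ` (coordinates `(x¹,x²,x₁',x₂')`). -/
abbrev Pt4 := Fin 4 → ℝ

/-- Projection to the base coordinates. -/
def base (p : Pt4) : Pt2 := ![p 0, p 1]

/-- Unprimed index `i ∈ {1,2}` as an index in `{1,2,1',2'}`. -/
def unp (i : Fin 2) : Fin 4 := ⟨i.1, by omega⟩
/-- Primed index `i' ∈ {1',2'}` as an index in `{1,2,1',2'}`. -/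
def pr (i : Fin 2) : Fin 4 := ⟨i.1 + 2, by omega⟩

/-- Partial derivative `∂_{x^i}` on the surface. -/
def pd2 (i : Fin 2) (f : Pt2 → ℝ) (p : Pt2) : ℝ :=
  fderiv ℝ f p (Pi.single i 1)

/-- Partial derivative `∂_a` on the cotangent bundle. -/
def pd4 (a : Fin 4) (f : Pt4 → ℝ) (p : Pt4) : ℝ :=
  fderiv ℝ f p (Pi.single a 1)

/-- The component `𝚪^{k'}_{ij}` of the Levi-Civita connection of a deformed
Riemannian extension. -/
def GammaPr (Γ : Fin 2 → Fin 2 → Fin 2 → Pt2 → ℝ) (Φ : Fin 2 → Fin 2 → Pt2 → ℝ)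
    (k i j : Fin 2) (p : Pt4) : ℝ :=
  (∑ r : Fin 2, p (pr r) *
      (pd2 k (Γ r i j) (base p) - pd2 i (Γ r j k) (base p) - pd2 j (Γ r i k) (base p)
        + 2 * ∑ l : Fin 2, Γ r k l (base p) * Γ l i j (base p)))
    + (1 / 2) * (pd2 i (Φ j k) (base p) + pd2 j (Φ i k) (base p) - pd2 k (Φ i j) (base p))
    - ∑ l : Fin 2, Φ k l (base p) * Γ l i j (base p)

/-- The Christoffel symbols `𝚪^a_{bc}` of the Levi-Civita connection of the deformed
Riemannian extension `g_{D,Φ}`:  `𝚪^k_{ij} = Γ^k_{ij}`, `𝚪^{k'}_{i'j} = 𝚪^{k'}_{j i'} = −Γ^i_{jk}`,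
`𝚪^{k'}_{ij} = GammaPr`, and all other coefficients zero. -/
def GG (Γ : Fin 2 → Fin 2 → Fin 2 → Pt2 → ℝ) (Φ : Fin 2 → Fin 2 → Pt2 → ℝ)
    (a b c : Fin 4) (p : Pt4) : ℝ :=
  if ha : a.1 < 2 then
    if hb : b.1 < 2 then
      if hc : c.1 < 2 then Γ ⟨a.1, ha⟩ ⟨b.1, hb⟩ ⟨c.1, hc⟩ (base p) else 0
    else 0
  else
    if hb : b.1 < 2 then
      if hc : c.1 < 2 then GammaPr Γ Φ ⟨a.1 - 2, by omega⟩ ⟨b.1, hb⟩ ⟨c.1, hc⟩ p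
      else -Γ ⟨c.1 - 2, by omega⟩ ⟨b.1, hb⟩ ⟨a.1 - 2, by omega⟩ (base p)
    else
      if hc : c.1 < 2 then -Γ ⟨b.1 - 2, by omega⟩ ⟨c.1, hc⟩ ⟨a.1 - 2, by omega⟩ (base p)
      else 0

/-- The deformed Riemannian extension metric `g_{D,Φ}`:
`g_{ij} = Φ_{ij} − 2(x₁' Γ¹_{ij} + x₂' Γ²_{ij})`, `g_{i j'} = g_{j' i} = δ_i^j`, `g_{i'j'} = 0`. -/
def gDE (Γ : Fin 2 → Fin 2 → Fin 2 → Pt2 → ℝ) (Φ : Fin 2 → Fin 2 → Pt2 → ℝ)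
    (a b : Fin 4) (p : Pt4) : ℝ :=
  if ha : a.1 < 2 then
    if hb : b.1 < 2 then
      Φ ⟨a.1, ha⟩ ⟨b.1, hb⟩ (base p)
        - 2 * ∑ r : Fin 2, p (pr r) * Γ r ⟨a.1, ha⟩ ⟨b.1, hb⟩ (base p)
    else if b.1 = a.1 + 2 then 1 else 0
  else
    if b.1 < 2 then (if a.1 = b.1 + 2 then 1 else 0) else 0

/-- The Ricci tensor `ρ_{ab}` of `g_{D,Φ}`, computed from its Christoffel symbols. -/
def ricci4 (Γ : Fin 2 → Fin 2 → Fin 2 → Pt2 → ℝ) (Φ : Fin 2 → Fin 2 → Pt2 → ℝ)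
    (a b : Fin 4) (p : Pt4) : ℝ :=
  (∑ c : Fin 4, pd4 c (GG Γ Φ c a b) p) - pd4 a (fun q => ∑ c : Fin 4, GG Γ Φ c c b q) p
    + ∑ c : Fin 4, ∑ d : Fin 4,
        (GG Γ Φ c c d p * GG Γ Φ d a b p - GG Γ Φ c a d p * GG Γ Φ d c b p)

/-- The Hessian `Hes_f(∂_a,∂_b) = ∂_a∂_b f − Σ_c 𝚪^c_{ab} ∂_c f` on `T*Σ`. -/
def hess4 (Γ : Fin 2 → Fin 2 → Fin 2 → Pt2 → ℝ) (Φ : Fin 2 → Fin 2 → Pt2 → ℝ)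
    (f : Pt4 → ℝ) (a b : Fin 4) (p : Pt4) : ℝ :=
  pd4 a (pd4 b f) p - ∑ c : Fin 4, GG Γ Φ c a b p * pd4 c f p

/-- The Ricci tensor `ρ^D_{ij}` of the affine connection `D` on the surface. -/
def ricciD (Γ : Fin 2 → Fin 2 → Fin 2 → Pt2 → ℝ) (i j : Fin 2) (p : Pt2) : ℝ :=
  (∑ k : Fin 2, pd2 k (Γ k i j) p) - pd2 i (fun q => ∑ k : Fin 2, Γ k k j q) p
    + ∑ k : Fin 2, ∑ l : Fin 2, (Γ k k l p * Γ l i j p - Γ k i l p * Γ l k j p)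

/-- The symmetrized Ricci tensor `ρ^{D,sym}_{ij}` of `D`. -/
def ricciDSym (Γ : Fin 2 → Fin 2 → Fin 2 → Pt2 → ℝ) (i j : Fin 2) (p : Pt2) : ℝ :=
  (ricciD Γ i j p + ricciD Γ j i p) / 2

/-- The affine Hessian `Hes^D_h(∂_i,∂_j) = ∂_i∂_j h − Σ_k Γ^k_{ij} ∂_k h` on the surface. -/
def hessD (Γ : Fin 2 → Fin 2 → Fin 2 → Pt2 → ℝ) (h : Pt2 → ℝ) (i j : Fin 2) (p : Pt2) : ℝ :=
  pd2 i (pd2 j h) p - ∑ k : Fin 2, Γ k i j p * pd2 k h p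



/-! ### Auxiliary machinery -/

/-- `base` as a continuous linear map. -/
def Bmap : Pt4 →L[ℝ] Pt2 := ContinuousLinearMap.pi (fun i => ContinuousLinearMap.proj (unp i))

lemma base_eq : base = ⇑Bmap := by
  funext p i; fin_cases i <;> rfl

lemma Bmap_single_unp (a : Fin 2) : Bmap (Pi.single (unp a) 1) = Pi.single a 1 := by
  funext i; simp [Bmap, Pi.single_apply, unp, Fin.ext_iff]

lemma Bmap_single_pr (a : Fin 2) : Bmap (Pi.single (pr a) 1) = 0 := by
  funext i; simp [Bmap, Pi.single_apply, pr, unp, Fin.ext_iff]; omega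

lemma diffAt_comp_base {f : Pt2 → ℝ} {p : Pt4} (hf : DifferentiableAt ℝ f (base p)) :
    DifferentiableAt ℝ (fun q => f (base q)) p := by
  rw [base_eq] at hf ⊢; exact hf.comp p Bmap.differentiableAt

lemma pd4_comp_unp {f : Pt2 → ℝ} {p : Pt4} (hf : DifferentiableAt ℝ f (base p)) (a : Fin 2) :
    pd4 (unp a) (fun q => f (base q)) p = pd2 a f (base p) := by
  rw [pd4, pd2, base_eq] at *
  rw [show (fun q => f (Bmap q)) = f ∘ Bmap from rfl, fderiv_comp p hf Bmap.differentiableAt,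
    Bmap.fderiv]
  simp [Bmap_single_unp]

lemma pd4_comp_pr {f : Pt2 → ℝ} {p : Pt4} (hf : DifferentiableAt ℝ f (base p)) (a : Fin 2) :
    pd4 (pr a) (fun q => f (base q)) p = 0 := by
  rw [pd4, base_eq] at *
  rw [show (fun q => f (Bmap q)) = f ∘ Bmap from rfl, fderiv_comp p hf Bmap.differentiableAt,
    Bmap.fderiv]
  simp [Bmap_single_pr]

lemma pd4_coord (c a : Fin 4) (p : Pt4) :
    pd4 a (fun q => q c) p = if c = a then 1 else 0 := by
  rw [pd4, show (fun q : Pt4 => q c)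
      = ⇑(ContinuousLinearMap.proj (R := ℝ) (φ := fun _ : Fin 4 => ℝ) c) from rfl,
    ContinuousLinearMap.fderiv]
  simp [Pi.single_apply]

lemma pd4_const (c : ℝ) (a : Fin 4) (p : Pt4) : pd4 a (fun _ => c) p = 0 := by simp [pd4]

lemma pd4_neg (f : Pt4 → ℝ) (a : Fin 4) (p : Pt4) :
    pd4 a (fun q => -f q) p = -pd4 a f p := by
  simp [pd4, fderiv_neg]

lemma pd4_add {f g : Pt4 → ℝ} {p : Pt4} (hf : DifferentiableAt ℝ f p)
    (hg : DifferentiableAt ℝ g p) (a : Fin 4) :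
    pd4 a (fun q => f q + g q) p = pd4 a f p + pd4 a g p := by
  simp [pd4, fderiv_fun_add hf hg]

lemma pd4_mul {f g : Pt4 → ℝ} {p : Pt4} (hf : DifferentiableAt ℝ f p)
    (hg : DifferentiableAt ℝ g p) (a : Fin 4) :
    pd4 a (fun q => f q * g q) p = f p * pd4 a g p + pd4 a f p * g p := by
  simp [pd4, fderiv_fun_mul hf hg]; ring

lemma pd2_add {f g : Pt2 → ℝ} {p : Pt2} (hf : DifferentiableAt ℝ f p)
    (hg : DifferentiableAt ℝ g p) (a : Fin 2) :
    pd2 a (fun q => f q + g q) p = pd2 a f p + pd2 a g p := by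
  simp [pd2, fderiv_fun_add hf hg]

lemma diff_pd2 {f : Pt2 → ℝ} {x : Pt2} {U : Set Pt2} (hU : IsOpen U) (hx : x ∈ U)
    (hf : ContDiffOn ℝ (⊤ : ℕ∞) f U) (s : Fin 2) : DifferentiableAt ℝ (pd2 s f) x := by
  have h := hf.contDiffAt (hU.mem_nhds hx)
  have h2 : ContDiffAt ℝ 1 (fderiv ℝ f) x := h.fderiv_right (WithTop.coe_le_coe.mpr le_top)
  exact (h2.clm_apply contDiffAt_const).differentiableAt one_ne_zero

section GGlemmas
variable (Γ : Fin 2 → Fin 2 → Fin 2 → Pt2 → ℝ) (Φ : Fin 2 → Fin 2 → Pt2 → ℝ)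

lemma GG_uuu (k i j : Fin 2) :
    GG Γ Φ (unp k) (unp i) (unp j) = fun q => Γ k i j (base q) := by
  funext q; simp [GG, unp, Fin.is_lt, Fin.is_le]

lemma GG_puu (k i j : Fin 2) :
    GG Γ Φ (pr k) (unp i) (unp j) = GammaPr Γ Φ k i j := by
  funext q; simp [GG, unp, pr, Fin.is_lt, Fin.is_le]

lemma GG_ppu (k i j : Fin 2) :
    GG Γ Φ (pr k) (pr i) (unp j) = fun q => -Γ i j k (base q) := by
  funext q; simp [GG, unp, pr, Fin.is_lt, Fin.is_le]

lemma GG_pup (k i j : Fin 2) :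
    GG Γ Φ (pr k) (unp j) (pr i) = fun q => -Γ i j k (base q) := by
  funext q; simp [GG, unp, pr, Fin.is_lt, Fin.is_le]

lemma GG_ppp (k i j : Fin 2) : GG Γ Φ (pr k) (pr i) (pr j) = fun _ => 0 := by
  funext q; simp [GG, pr]

lemma GG_uxp (k : Fin 2) (a : Fin 4) (i : Fin 2) : GG Γ Φ (unp k) a (pr i) = fun _ => 0 := by
  funext q; simp [GG, unp, pr, Fin.is_le]

lemma GG_upx (k i : Fin 2) (a : Fin 4) : GG Γ Φ (unp k) (pr i) a = fun _ => 0 := by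
  funext q; simp [GG, unp, pr, Fin.is_le]

/-- coefficient of `x_{r'}` in `GammaPr`. -/
def Acoef (r k i j : Fin 2) (x : Pt2) : ℝ :=
  pd2 k (Γ r i j) x - pd2 i (Γ r j k) x - pd2 j (Γ r i k) x
    + 2 * ∑ l : Fin 2, Γ r k l x * Γ l i j x

/-- the `x'`-independent part of `GammaPr`. -/
def Ccoef (k i j : Fin 2) (x : Pt2) : ℝ :=
  (1 / 2) * (pd2 i (Φ j k) x + pd2 j (Φ i k) x - pd2 k (Φ i j) x)
    - ∑ l : Fin 2, Φ k l x * Γ l i j x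

lemma GammaPr_eq (k i j : Fin 2) : GammaPr Γ Φ k i j =
    fun q => (q (pr 0) * Acoef Γ 0 k i j (base q) + q (pr 1) * Acoef Γ 1 k i j (base q))
      + Ccoef Γ Φ k i j (base q) := by
  funext q; simp only [GammaPr, Acoef, Ccoef, Fin.sum_univ_two]; ring

lemma pd4_pr_GammaPr {p : Pt4} (k i j s : Fin 2)
    (hA : ∀ r, DifferentiableAt ℝ (Acoef Γ r k i j) (base p))
    (hC : DifferentiableAt ℝ (Ccoef Γ Φ k i j) (base p)) :
    pd4 (pr s) (GammaPr Γ Φ k i j) p = Acoef Γ s k i j (base p) := by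
  rw [GammaPr_eq]
  have d0 : DifferentiableAt ℝ (fun q : Pt4 => q (pr 0)) p := differentiableAt_apply (𝕜 := ℝ) _ _
  have d1 : DifferentiableAt ℝ (fun q : Pt4 => q (pr 1)) p := differentiableAt_apply (𝕜 := ℝ) _ _
  have hA0 := diffAt_comp_base (hA 0)
  have hA1 := diffAt_comp_base (hA 1)
  have hC' := diffAt_comp_base hC
  rw [pd4_add ((d0.fun_mul hA0).fun_add (d1.fun_mul hA1)) hC',
    pd4_add (d0.fun_mul hA0) (d1.fun_mul hA1),
    pd4_mul d0 hA0, pd4_mul d1 hA1,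
    pd4_comp_pr (hA 0), pd4_comp_pr (hA 1), pd4_comp_pr hC,
    pd4_coord, pd4_coord]
  fin_cases s <;> simp [pr, Fin.ext_iff] <;> (intro h; omega)

end GGlemmas

lemma sum4 (f : Fin 4 → ℝ) :
    ∑ c : Fin 4, f c = f (unp 0) + f (unp 1) + f (pr 0) + f (pr 1) := by
  rw [Fin.sum_univ_four]; rfl

lemma fin4_split (a : Fin 4) : (∃ i : Fin 2, a = unp i) ∨ (∃ i : Fin 2, a = pr i) := by
  by_cases h : a.1 < 2
  · exact Or.inl ⟨⟨a.1, h⟩, Fin.ext rfl⟩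
  · exact Or.inr ⟨⟨a.1 - 2, by omega⟩, Fin.ext (by simp [pr]; omega)⟩


/-- The Ricci tensor `ρ_{ab}` of the deformed Riemannian extension
`g_{D,Φ}` vanishes whenever one of the indices is primed, and on unprimed indices it
equals `2 ρ^{D,sym}_{ij}(x¹,x²)`.  In particular it is independent of `Φ` and of the
fiber coordinates `(x₁',x₂')`. -/
theorem stmt2 (U : Set Pt2) (hU : IsOpen U)
    (Γ : Fin 2 → Fin 2 → Fin 2 → Pt2 → ℝ)
    (hΓsmooth : ∀ k i j, ContDiffOn ℝ (⊤ : ℕ∞) (Γ k i j) U)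
    (hΓsym : ∀ k i j, Γ k i j = Γ k j i)
    (Φ : Fin 2 → Fin 2 → Pt2 → ℝ)
    (hΦsmooth : ∀ i j, ContDiffOn ℝ (⊤ : ℕ∞) (Φ i j) U)
    (hΦsym : ∀ i j, Φ i j = Φ j i) :
    ∀ p : Pt4, base p ∈ U →
      (∀ a b : Fin 4, 2 ≤ a.1 ∨ 2 ≤ b.1 → ricci4 Γ Φ a b p = 0) ∧
      (∀ i j : Fin 2, ricci4 Γ Φ (unp i) (unp j) p = 2 * ricciDSym Γ i j (base p))  := by
  intro p hp
  have hG : ∀ k i j, DifferentiableAt ℝ (Γ k i j) (base p) :=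
    fun k i j => ((hΓsmooth k i j).contDiffAt (hU.mem_nhds hp)).differentiableAt (by simp)
  have hG2 : ∀ s k i j, DifferentiableAt ℝ (pd2 s (Γ k i j)) (base p) :=
    fun s k i j => diff_pd2 hU hp (hΓsmooth k i j) s
  have hF : ∀ i j, DifferentiableAt ℝ (Φ i j) (base p) :=
    fun i j => ((hΦsmooth i j).contDiffAt (hU.mem_nhds hp)).differentiableAt (by simp)
  have hF2 : ∀ s i j, DifferentiableAt ℝ (pd2 s (Φ i j)) (base p) :=
    fun s i j => diff_pd2 hU hp (hΦsmooth i j) s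
  have hA : ∀ r k i j, DifferentiableAt ℝ (Acoef Γ r k i j) (base p) :=
    fun r k i j =>
      (((hG2 k r i j).sub (hG2 i r j k)).sub (hG2 j r i k)).add
        ((DifferentiableAt.fun_sum (fun l _ => (hG r k l).fun_mul (hG l i j))).const_mul 2)
  have hC : ∀ k i j, DifferentiableAt ℝ (Ccoef Γ Φ k i j) (base p) :=
    fun k i j =>
      ((((hF2 i j k).add (hF2 j i k)).sub (hF2 k i j)).const_mul (1/2)).sub
        (DifferentiableAt.fun_sum (fun l _ => (hF k l).fun_mul (hG l i j)))
  have hzU : ∀ j : Fin 2, (fun q => ∑ c : Fin 4, GG Γ Φ c c (unp j) q) = fun _ => (0:ℝ) := by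
    intro j; funext q
    rw [sum4]
    simp only [GG_uuu, GG_ppu]
    rw [hΓsym 0 0 j, hΓsym 1 1 j]; ring
  have hzP : ∀ n : Fin 2, (fun q => ∑ c : Fin 4, GG Γ Φ c c (pr n) q) = fun _ => (0:ℝ) := by
    intro n; funext q
    rw [sum4]
    simp only [GG_uxp, GG_ppp]; ring
  constructor
  · intro a b hab
    rcases fin4_split a with ⟨m, rfl⟩ | ⟨m, rfl⟩ <;> rcases fin4_split b with ⟨n, rfl⟩ | ⟨n, rfl⟩
    · exfalso; have h1 := m.2; have h2 := n.2; simp only [unp] at hab; omega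
    · -- a unprimed, b primed
      simp only [ricci4]
      rw [hzP n]
      simp only [sum4]
      simp only [GG_uuu, GG_puu, GG_ppu, GG_pup, GG_ppp, GG_uxp, GG_upx]
      simp only [pd4_neg, pd4_const]
      rw [pd4_comp_pr (hG n m 0) 0, pd4_comp_pr (hG n m 1) 1]
      ring
    · -- a primed, b unprimed
      simp only [ricci4]
      rw [hzU n]
      simp only [sum4]
      simp only [GG_uuu, GG_puu, GG_ppu, GG_pup, GG_ppp, GG_uxp, GG_upx]
      simp only [pd4_neg, pd4_const]
      rw [pd4_comp_pr (hG m n 0) 0, pd4_comp_pr (hG m n 1) 1]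
      ring
    · -- both primed
      simp only [ricci4]
      rw [hzP n]
      simp only [sum4]
      simp only [GG_uuu, GG_puu, GG_ppu, GG_pup, GG_ppp, GG_uxp, GG_upx]
      simp only [pd4_const]
      ring
  · intro i j
    have hs : ∀ i j : Fin 2, pd2 i (fun q => Γ 0 0 j q + Γ 1 1 j q) (base p)
        = pd2 i (Γ 0 0 j) (base p) + pd2 i (Γ 1 1 j) (base p) :=
      fun i j => pd2_add (hG 0 0 j) (hG 1 1 j) i
    simp only [ricci4]
    rw [hzU j]
    simp only [sum4]
    simp only [GG_uuu, GG_puu, GG_ppu, GG_pup, GG_ppp, GG_uxp, GG_upx]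
    rw [pd4_comp_unp (hG 0 i j) 0, pd4_comp_unp (hG 1 i j) 1,
      pd4_pr_GammaPr Γ Φ 0 i j 0 (fun r => hA r 0 i j) (hC 0 i j),
      pd4_pr_GammaPr Γ Φ 1 i j 1 (fun r => hA r 1 i j) (hC 1 i j),
      pd4_const]
    simp only [ricciDSym, ricciD, Fin.sum_univ_two]
    rw [hs i j, hs j i]
    simp only [Acoef, Fin.sum_univ_two]
    simp only [hΓsym 0 j i, hΓsym 1 j i, hΓsym 0 i 0, hΓsym 0 i 1, hΓsym 1 i 0, hΓsym 1 i 1,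
      hΓsym 0 j 0, hΓsym 0 j 1, hΓsym 1 j 0, hΓsym 1 j 1, hΓsym 0 1 0, hΓsym 1 1 0]
    ring

end
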